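/- Let A ⊆ ℝ, x ∈ ℝ, and let A' be a measurable cover of A with lower I-density I-d₋(x, A') > 0. Then x is a limit point of A in the I-sparse set topology: every U ∈ 𝒰 with x ∈ U satisfies U ∩ (A \ {x}) ≠ ∅. -/

import Mathlib

open MeasureTheory Filter Set
open scoped ENNReal

noncomputable section

/-- A nontrivial admissible ideal of subsets of ℕ: closed under subsets and
finite unions, contains every finite set, and does not contain ℕ itself. -/
structure AdmissibleIdeal : Type where
  carrier : Set (Set ℕ)
  subset_mem : ∀ ⦃A B : Set ℕ⦄, A ∈ carrier → B ⊆ A → B ∈ carrier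
  union_mem : ∀ ⦃A B : Set ℕ⦄, A ∈ carrier → B ∈ carrier → A ∪ B ∈ carrier
  finite_mem : ∀ A : Set ℕ, A.Finite → A ∈ carrier
  univ_not_mem : (Set.univ : Set ℕ) ∉ carrier

/-- The filter F(I) = {M ⊆ ℕ : ℕ \ M ∈ I} associated with the ideal I. -/
def AdmissibleIdeal.filter (I : AdmissibleIdeal) : Filter ℕ :=
  Filter.comk (· ∈ I.carrier) (I.finite_mem ∅ Set.finite_empty)
    (fun _t ht _s hs => I.subset_mem ht hs)
    (fun _s hs _t ht => I.union_mem hs ht)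

/-- A sequence of closed intervals admissible about the point `p`:
each `J n` is a closed interval containing `p`, and
`{n : 0 < λ(J n) < 1/n} ∈ F(I)`. -/
def AdmissibleSeq (I : AdmissibleIdeal) (p : ℝ) (J : ℕ → Set ℝ) : Prop :=
  (∀ n, ∃ a b : ℝ, a ≤ b ∧ J n = Set.Icc a b) ∧ (∀ n, p ∈ J n) ∧
    {n : ℕ | 0 < volume (J n) ∧ volume (J n) < (n : ℝ≥0∞)⁻¹} ∈ I.filter

/-- The sequence n ↦ λ(E ∩ J n)/λ(J n) (interpreted as 0 when λ(J n) = 0). -/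
def ratioSeq (E : Set ℝ) (J : ℕ → Set ℝ) : ℕ → ℝ :=
  fun n => (volume (E ∩ J n) / volume (J n)).toReal

/-- Upper I-density of `E` at `p`: sup over admissible sequences of the
limsup along `F(I)` of the measure ratios. -/
def upperIDensity (I : AdmissibleIdeal) (p : ℝ) (E : Set ℝ) : ℝ :=
  sSup {l : ℝ | ∃ J : ℕ → Set ℝ, AdmissibleSeq I p J ∧
    l = Filter.limsup (ratioSeq E J) I.filter}

/-- Lower I-density of `E` at `p`: inf over admissible sequences of the
liminf along `F(I)` of the measure ratios. -/
def lowerIDensity (I : AdmissibleIdeal) (p : ℝ) (E : Set ℝ) : ℝ :=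
  sInf {l : ℝ | ∃ J : ℕ → Set ℝ, AdmissibleSeq I p J ∧
    l = Filter.liminf (ratioSeq E J) I.filter}

/-- `C` is a measurable cover of `A`. -/
def IsMeasurableCover (C A : Set ℝ) : Prop :=
  MeasurableSet C ∧ A ⊆ C ∧
    ∀ F : Set ℝ, MeasurableSet F → F ⊆ C \ A → volume F = 0

/-- `A` is I-sparse at `x`, i.e. `A ∈ S_I(x)`. -/
def ISparseAt (I : AdmissibleIdeal) (A : Set ℝ) (x : ℝ) : Prop :=
  ∀ B : Set ℝ, MeasurableSet B → upperIDensity I x B < 1 →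
    ∀ C : Set ℝ, IsMeasurableCover C A → upperIDensity I x (C ∪ B) < 1

/-- The I-density topology T_I. -/
def IDensityTopology (I : AdmissibleIdeal) : Set (Set ℝ) :=
  {E | MeasurableSet E ∧ ∀ x ∈ E, lowerIDensity I x E = 1}

/-- The I-sparse set topology 𝒰. -/
def sparseTop (I : AdmissibleIdeal) : Set (Set ℝ) :=
  {E | ∀ x ∈ E, ISparseAt I Eᶜ x}

/-!
Suppose `U ∈ 𝒰` contains `x` but misses `A \ {x}`. Then `A \ {x}` lies in a measurable cover `C`
of `Uᶜ`, so `A' \ C` is null and `C ∪ A'ᶜ` has upper I-density `1` at `x`. But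
`I-d⁻(x, A'ᶜ) ≤ 1 - I-d₋(x, A') < 1`, so the I-sparseness of `Uᶜ` at `x` gives
`I-d⁻(x, C ∪ A'ᶜ) < 1`.
-/

instance AdmissibleIdeal.filter_neBot (I : AdmissibleIdeal) : I.filter.NeBot := by
  refine neBot_iff.mpr fun h => I.univ_not_mem ?_
  simpa using mem_comk.mp (h ▸ mem_bot : (∅ : Set ℕ) ∈ I.filter)

lemma exists_admissibleSeq (I : AdmissibleIdeal) (p : ℝ) : ∃ J, AdmissibleSeq I p J := by
  have hlen : ∀ n : ℕ, (0 : ℝ) < ((n : ℝ) + 2)⁻¹ := fun n => by positivity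
  refine ⟨fun n => Icc p (p + ((n : ℝ) + 2)⁻¹),
    fun n => ⟨_, _, le_add_of_nonneg_right (hlen n).le, rfl⟩,
    fun n => ⟨le_rfl, le_add_of_nonneg_right (hlen n).le⟩, ?_⟩
  convert univ_mem using 1
  refine eq_univ_of_forall fun n => ?_
  have hcast : ENNReal.ofReal ((n : ℝ) + 2) = (n : ℝ≥0∞) + 2 := by
    rw [ENNReal.ofReal_add (by positivity) zero_le_two]
    simp
  simp only [mem_ofPred_eq, Real.volume_Icc, add_sub_cancel_left]
  rw [ENNReal.ofReal_inv_of_pos (by positivity), hcast]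
  exact ⟨ENNReal.inv_pos.mpr (by simp),
    ENNReal.inv_lt_inv.mpr (ENNReal.lt_add_right (ENNReal.natCast_ne_top n) two_ne_zero)⟩

section ratioSeq

variable {I : AdmissibleIdeal}

lemma ratioSeq_nonneg (E : Set ℝ) (J : ℕ → Set ℝ) (n : ℕ) : 0 ≤ ratioSeq E J n :=
  ENNReal.toReal_nonneg

lemma ratioSeq_le_one (E : Set ℝ) (J : ℕ → Set ℝ) (n : ℕ) : ratioSeq E J n ≤ 1 :=
  ENNReal.toReal_le_of_le_ofReal zero_le_one <| by
    rw [ENNReal.ofReal_one]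
    exact ENNReal.div_le_of_le_mul (by rw [one_mul]; exact measure_mono inter_subset_right)

lemma ratioSeq_isBoundedUnder_ge (E : Set ℝ) (J : ℕ → Set ℝ) :
    I.filter.IsBoundedUnder (· ≥ ·) (ratioSeq E J) :=
  isBoundedUnder_of_eventually_ge (.of_forall (ratioSeq_nonneg E J))

lemma ratioSeq_isCoboundedUnder_ge (E : Set ℝ) (J : ℕ → Set ℝ) :
    I.filter.IsCoboundedUnder (· ≥ ·) (ratioSeq E J) :=
  isCoboundedUnder_ge_of_le I.filter (ratioSeq_le_one E J)

lemma limsup_ratioSeq_le_one (E : Set ℝ) (J : ℕ → Set ℝ) :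
    limsup (ratioSeq E J) I.filter ≤ 1 :=
  limsup_le_of_le (isCoboundedUnder_le_of_le I.filter (ratioSeq_nonneg E J))
    (.of_forall (ratioSeq_le_one E J))

lemma liminf_ratioSeq_nonneg (E : Set ℝ) (J : ℕ → Set ℝ) :
    0 ≤ liminf (ratioSeq E J) I.filter :=
  le_liminf_of_le (ratioSeq_isCoboundedUnder_ge E J) (.of_forall (ratioSeq_nonneg E J))

variable {E : Set ℝ} {J : ℕ → Set ℝ} {n : ℕ} {p : ℝ}

lemma ratioSeq_eq_one_of_measure_compl_eq_zero (hE : volume Eᶜ = 0) (h0 : volume (J n) ≠ 0)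
    (htop : volume (J n) ≠ ∞) : ratioSeq E J n = 1 := by
  rw [ratioSeq, inter_comm, measure_inter_conull hE, ENNReal.div_self h0 htop, ENNReal.toReal_one]

lemma ratioSeq_add_ratioSeq_compl (hE : MeasurableSet E) (h0 : volume (J n) ≠ 0)
    (htop : volume (J n) ≠ ∞) : ratioSeq E J n + ratioSeq Eᶜ J n = 1 := by
  have hsum : volume (E ∩ J n) + volume (Eᶜ ∩ J n) = volume (J n) := by
    simpa [Measure.restrict_apply hE, Measure.restrict_apply hE.compl] using
      measure_add_measure_compl (μ := volume.restrict (J n)) hE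
  have hfin : ∀ F : Set ℝ, volume (F ∩ J n) / volume (J n) ≠ ∞ := fun F =>
    ENNReal.div_ne_top ((measure_mono inter_subset_right).trans_lt htop.lt_top).ne h0
  rw [ratioSeq, ratioSeq, ← ENNReal.toReal_add (hfin E) (hfin Eᶜ), ENNReal.div_add_div_same,
    hsum, ENNReal.div_self h0 htop, ENNReal.toReal_one]

lemma AdmissibleSeq.eventually_measure_ne_zero_ne_top (hJ : AdmissibleSeq I p J) :
    ∀ᶠ n in I.filter, volume (J n) ≠ 0 ∧ volume (J n) ≠ ∞ :=
  mem_of_superset hJ.2.2 fun _ hn => ⟨hn.1.ne', (hn.2.trans_le le_top).ne⟩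

lemma AdmissibleSeq.limsup_ratioSeq_of_measure_compl_eq_zero (hJ : AdmissibleSeq I p J)
    (hE : volume Eᶜ = 0) : limsup (ratioSeq E J) I.filter = 1 := by
  have hone : ratioSeq E J =ᶠ[I.filter] fun _ => 1 :=
    hJ.eventually_measure_ne_zero_ne_top.mono fun _ hn =>
      ratioSeq_eq_one_of_measure_compl_eq_zero hE hn.1 hn.2
  rw [limsup_congr hone, limsup_const]

lemma AdmissibleSeq.limsup_ratioSeq_compl (hJ : AdmissibleSeq I p J) (hE : MeasurableSet E) :
    limsup (ratioSeq Eᶜ J) I.filter = 1 - liminf (ratioSeq E J) I.filter := by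
  have hcompl : ratioSeq Eᶜ J =ᶠ[I.filter] fun n => 1 - ratioSeq E J n :=
    hJ.eventually_measure_ne_zero_ne_top.mono fun _ hn =>
      eq_sub_of_add_eq' (ratioSeq_add_ratioSeq_compl hE hn.1 hn.2)
  rw [limsup_congr hcompl, limsup_const_sub I.filter _ 1 (ratioSeq_isCoboundedUnder_ge E J)
    (ratioSeq_isBoundedUnder_ge E J)]

end ratioSeq

section density

variable (I : AdmissibleIdeal) (p : ℝ) {E : Set ℝ}

lemma upperIDensity_compl_le (hE : MeasurableSet E) :
    upperIDensity I p Eᶜ ≤ 1 - lowerIDensity I p E := by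
  obtain ⟨J₀, hJ₀⟩ := exists_admissibleSeq I p
  refine csSup_le ⟨_, J₀, hJ₀, rfl⟩ ?_
  rintro _ ⟨J, hJ, rfl⟩
  have hlower : lowerIDensity I p E ≤ liminf (ratioSeq E J) I.filter :=
    csInf_le ⟨0, fun _ ⟨J', _, hl⟩ => hl ▸ liminf_ratioSeq_nonneg E J'⟩ ⟨J, hJ, rfl⟩
  rw [hJ.limsup_ratioSeq_compl hE]
  linarith

lemma one_le_upperIDensity_of_measure_compl_eq_zero (hE : volume Eᶜ = 0) :
    1 ≤ upperIDensity I p E := by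
  obtain ⟨J, hJ⟩ := exists_admissibleSeq I p
  exact le_csSup ⟨1, fun _ ⟨J', _, hl⟩ => hl ▸ limsup_ratioSeq_le_one E J'⟩
    ⟨J, hJ, (hJ.limsup_ratioSeq_of_measure_compl_eq_zero hE).symm⟩

end density

lemma isMeasurableCover_toMeasurable (A : Set ℝ) :
    IsMeasurableCover (toMeasurable volume A) A := by
  refine ⟨measurableSet_toMeasurable _ _, subset_toMeasurable _ _, fun F hF hFA => ?_⟩
  have hdisj : A ∩ F = ∅ := eq_empty_of_forall_notMem fun y hy => (hFA hy.2).2 hy.1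
  rw [← inter_eq_right.mpr (hFA.trans sdiff_subset),
    Measure.measure_toMeasurable_inter_of_sFinite hF, hdisj, measure_empty]

lemma IsMeasurableCover.measure_diff_eq_zero {C A N D : Set ℝ} (hC : IsMeasurableCover C A)
    (hD : MeasurableSet D) (hN : MeasurableSet N) (hN0 : volume N = 0) (hAD : A \ N ⊆ D) :
    volume (C \ D) = 0 := by
  have hcover : (C \ D) \ N ⊆ C \ A := fun y hy => ⟨hy.1.1, fun hyA => hy.1.2 (hAD ⟨hyA, hy.2⟩)⟩
  refine measure_mono_null (fun y hy => ?_) (measure_union_null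
    (hC.2.2 _ ((hC.1.diff hD).diff hN) hcover) hN0)
  by_cases hyN : y ∈ N
  exacts [Or.inr hyN, Or.inl ⟨hy, hyN⟩]

/-- If some measurable cover of `A` has positive lower I-density at `x`, then `x` is
a limit point of `A` in the I-sparse set topology. -/
theorem sparseTop_limit_point (I : AdmissibleIdeal) (A : Set ℝ) (x : ℝ) (A' : Set ℝ)
    (hA' : IsMeasurableCover A' A) (hpos : 0 < lowerIDensity I x A') :
    ∀ U ∈ sparseTop I, x ∈ U → (U ∩ (A \ {x})).Nonempty := by
  intro U hU hxU
  by_contra hdisj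
  set C := toMeasurable volume Uᶜ
  have hAC : A \ {x} ⊆ C := fun y hy =>
    subset_toMeasurable _ _ fun hyU => hdisj ⟨y, hyU, hy⟩
  have hconull : volume (C ∪ A'ᶜ)ᶜ = 0 := by
    rw [compl_union, compl_compl, inter_comm, ← sdiff_eq]
    exact hA'.measure_diff_eq_zero (measurableSet_toMeasurable _ _)
      (measurableSet_singleton x) (measure_singleton x) hAC
  have hsparse : upperIDensity I x (C ∪ A'ᶜ) < 1 :=
    hU x hxU A'ᶜ hA'.1.compl (by linarith [upperIDensity_compl_le I x hA'.1])
      C (isMeasurableCover_toMeasurable Uᶜ)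
  exact (one_le_upperIDensity_of_measure_compl_eq_zero I x hconull).not_gt hsparse
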